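/- Let φ : M → M' be a homomorphism of abelian groups. Assume there is a positive integer N with N·(ker φ) = 0, and assume the cokernel of φ has no nontrivial divisible subgroup. Then φ maps the maximal divisible subgroup of M onto the maximal divisible subgroup of M'; in particular φ(M_div) = M'_div. -/
import Mathlib


def IsDivisibleSub {A : Type*} [AddCommGroup A] (D : AddSubgroup A) : Prop :=
  ∀ n : ℕ, 0 < n → ∀ d ∈ D, ∃ d' ∈ D, n • d' = d

def maxDiv (A : Type*) [AddCommGroup A] : AddSubgroup A :=
  sSup {D : AddSubgroup A | IsDivisibleSub D}

lemma isDiv_map {A B : Type*} [AddCommGroup A] [AddCommGroup B] (f : A →+ B)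
    {D : AddSubgroup A} (hD : IsDivisibleSub D) : IsDivisibleSub (D.map f) := by
  rintro n hn _ ⟨d, hd, rfl⟩
  obtain ⟨d', hd', h⟩ := hD n hn d hd
  exact ⟨f d', ⟨d', hd', rfl⟩, by rw [← map_nsmul, h]⟩

lemma le_maxDiv {A : Type*} [AddCommGroup A] {D : AddSubgroup A}
    (hD : IsDivisibleSub D) : D ≤ maxDiv A :=
  le_sSup hD

lemma maxDiv_div (A : Type*) [AddCommGroup A] : IsDivisibleSub (maxDiv A) := by
  intro n hn d hd
  have hrw : maxDiv A = ⨆ D : {D : AddSubgroup A // IsDivisibleSub D}, (D : AddSubgroup A) := by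
    rw [maxDiv, sSup_eq_iSup']; rfl
  rw [hrw] at hd
  refine AddSubgroup.iSup_induction _ (C := fun x => ∃ d' ∈ maxDiv A, n • d' = x) hd ?_ ?_ ?_
  · rintro ⟨D, hD⟩ x hx
    obtain ⟨d', hd', h⟩ := hD n hn x hx
    exact ⟨d', le_maxDiv hD hd', h⟩
  · exact ⟨0, (maxDiv A).zero_mem, smul_zero n⟩
  · rintro x y ⟨x', hx', rfl⟩ ⟨y', hy', rfl⟩
    exact ⟨x' + y', (maxDiv A).add_mem hx' hy', smul_add n x' y'⟩

theorem stmt1 {M M' : Type*} [AddCommGroup M] [AddCommGroup M'] (φ : M →+ M')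
    (N : ℕ) (hN : 0 < N) (hker : ∀ x ∈ φ.ker, N • x = 0)
    (hcoker : ∀ D : AddSubgroup (M' ⧸ φ.range), IsDivisibleSub D → D = ⊥) :
    (maxDiv M).map φ = maxDiv M' := by
  have hdiv' := maxDiv_div M'
  apply le_antisymm
  · exact le_maxDiv (isDiv_map φ (maxDiv_div M))
  · -- first, maxDiv M' ≤ range φ
    have hrange : maxDiv M' ≤ φ.range := by
      have hbot : (maxDiv M').map (QuotientAddGroup.mk' φ.range) = ⊥ :=
        hcoker _ (isDiv_map _ hdiv')
      intro y hy
      have hmem : (QuotientAddGroup.mk' φ.range) y ∈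
          (maxDiv M').map (QuotientAddGroup.mk' φ.range) :=
        AddSubgroup.mem_map_of_mem _ hy
      rw [hbot, AddSubgroup.mem_bot] at hmem
      rwa [QuotientAddGroup.mk'_apply, QuotientAddGroup.eq_zero_iff] at hmem
    set S := (maxDiv M').comap φ with hS
    set T := S.map (zsmulAddGroupHom (N : ℤ)) with hT
    have hTdiv : IsDivisibleSub T := by
      rintro n hn _ ⟨c, hc, rfl⟩
      obtain ⟨y', hy', hyeq⟩ := hdiv' (n * N) (by positivity) (φ c) hc
      obtain ⟨c', hc'⟩ := hrange hy'
      have hc'S : c' ∈ S := by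
        rw [hS, AddSubgroup.mem_comap, hc']; exact hy'
      refine ⟨(N : ℤ) • ((N : ℤ) • c'), ⟨(N : ℤ) • c', S.zsmul_mem hc'S _, rfl⟩, ?_⟩
      have hkerm : c - (n * N) • c' ∈ φ.ker := by
        rw [AddMonoidHom.mem_ker, map_sub, map_nsmul, hc', hyeq, sub_self]
      have h0 : N • (c - (n * N) • c') = 0 := hker _ hkerm
      have h1 : N • c = N • ((n * N) • c') := by
        rw [smul_sub, sub_eq_zero] at h0; exact h0
      show n • ((N : ℤ) • ((N : ℤ) • c')) = zsmulAddGroupHom (N : ℤ) c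
      rw [zsmulAddGroupHom_apply, natCast_zsmul, natCast_zsmul, natCast_zsmul,
        smul_smul, smul_smul, h1, smul_smul]
      congr 1
      ring
    intro x hx
    obtain ⟨y, hy, hyx⟩ := hdiv' N hN x hx
    obtain ⟨c, hc⟩ := hrange hy
    have hcS : c ∈ S := by rw [hS, AddSubgroup.mem_comap, hc]; exact hy
    have hTm : (N : ℤ) • c ∈ T := ⟨c, hcS, rfl⟩
    have : (N : ℤ) • c ∈ maxDiv M := le_maxDiv hTdiv hTm
    exact ⟨(N : ℤ) • c, this, by rw [map_zsmul, hc, natCast_zsmul, hyx]⟩
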